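/- arXiv:2107.05195 — 2 statements merged into one kernel-verified Lean document; each statement's English description precedes it below -/
import Mathlib

section
/- Let A and B be self-adjoint operators on a Hilbert space with commutator i[A,B] = λ·Id for some real λ. Then there exists a universal constant c > 0 such that for all vectors Ψ (in a suitable dense domain), ‖A²BΨ‖² + ‖ABAΨ‖² + ‖BA²Ψ‖² ≤ c(‖A³Ψ‖² + ‖B³Ψ‖² + λ²‖AΨ‖² + λ²‖BΨ‖²). -/
/-!
Write the commutation relation as `AB = BA + κ` with `κ = -iλ`. Then `A²B = BA² + 2κA`, and since
`AB` and `BA` commute, `BA²B = AB²A`; with the symmetry of `A` and `B` this gives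
`‖A²BΨ‖² = ⟪B²AΨ, A³Ψ⟫ + 2κ⟪BΨ, A³Ψ⟫`. By Cauchy–Schwarz, `‖A²BΨ‖²` is bounded by
`‖B²AΨ‖ ‖A³Ψ‖` plus a lower-order term and, exchanging the roles of `A` and `B`, `‖B²AΨ‖²` by
`‖A²BΨ‖ ‖B³Ψ‖` plus a lower-order term; AM–GM decouples the two bounds. Finally `ABAΨ` and `BA²Ψ`
differ from `A²BΨ` by multiples of `κAΨ`.
-/

section Commutator

variable {𝕜 R : Type*} [CommSemiring 𝕜] [Ring R] [Algebra 𝕜 R] {a b : R} {κ : 𝕜}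

theorem mul_mul_eq_mul_mul_add_smul_of_mul_eq (h : a * b = b * a + κ • 1) :
    a * a * b = a * b * a + κ • a := by
  conv_lhs => rw [mul_assoc, h, mul_add, mul_smul_comm, mul_one, ← mul_assoc]

theorem mul_mul_eq_mul_mul_add_two_smul_of_mul_eq (h : a * b = b * a + κ • 1) :
    a * a * b = b * a * a + (2 * κ) • a := by
  rw [mul_mul_eq_mul_mul_add_smul_of_mul_eq h, h, add_mul, smul_mul_assoc, one_mul, add_assoc,
    ← add_smul, two_mul]

theorem commute_mul_mul_of_mul_eq (h : a * b = b * a + κ • 1) : Commute (a * b) (b * a) := by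
  rw [h]
  exact (Commute.refl _).add_left ((Commute.one_left _).smul_left κ)

end Commutator

theorem sq_le_three_mul_of_coupled_bounds {m s a b p q L : ℝ}
    (hm : m ^ 2 ≤ s * a + 2 * L * q * a) (hs : s ^ 2 ≤ m * b + 2 * L * p * b) :
    m ^ 2 ≤ 3 * (a ^ 2 + b ^ 2 + L ^ 2 * p ^ 2 + L ^ 2 * q ^ 2) := by
  nlinarith [sq_nonneg (s - a / 2), sq_nonneg (L * q - a), sq_nonneg (m - b), sq_nonneg (L * p - b)]

section CanonicalCommutation

open scoped InnerProductSpace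

variable {𝕜 H : Type*} [RCLike 𝕜] [NormedAddCommGroup H] [InnerProductSpace 𝕜 H]
  {A B : Module.End 𝕜 H} {κ : 𝕜}

theorem norm_sq_eq_inner_add_inner_of_mul_eq (hA : A.IsSymmetric) (hB : B.IsSymmetric)
    (h : A * B = B * A + κ • 1) (x : H) :
    (‖A (A (B x))‖ ^ 2 : 𝕜) = ⟪B (B (A x)), A (A (A x))⟫_𝕜 + 2 * κ * ⟪B x, A (A (A x))⟫_𝕜 := by
  have hAAB : A (A (B x)) = B (A (A x)) + (2 * κ) • A x :=
    LinearMap.congr_fun (mul_mul_eq_mul_mul_add_two_smul_of_mul_eq h) x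
  have hBAAB : B (A (A (B x))) = A (B (B (A x))) :=
    (LinearMap.congr_fun (commute_mul_mul_of_mul_eq h).eq x).symm
  calc (‖A (A (B x))‖ ^ 2 : 𝕜) = ⟪A (A (B x)), A (A (B x))⟫_𝕜 :=
        (inner_self_eq_norm_sq_to_K _).symm
    _ = ⟪A (A (B x)), B (A (A x))⟫_𝕜 + 2 * κ * ⟪A (A (B x)), A x⟫_𝕜 := by
      conv_lhs => arg 3; rw [hAAB]
      rw [inner_add_right, inner_smul_right]
    _ = _ := by rw [← hB, hBAAB, hA, hA, hA]

theorem norm_sq_le_of_mul_eq (hA : A.IsSymmetric) (hB : B.IsSymmetric)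
    (h : A * B = B * A + κ • 1) (x : H) :
    ‖A (A (B x))‖ ^ 2 ≤
      ‖B (B (A x))‖ * ‖A (A (A x))‖ + 2 * ‖κ‖ * ‖B x‖ * ‖A (A (A x))‖ := by
  calc ‖A (A (B x))‖ ^ 2 = ‖(‖A (A (B x))‖ ^ 2 : 𝕜)‖ := by simp
    _ ≤ ‖⟪B (B (A x)), A (A (A x))⟫_𝕜‖ + ‖2 * κ * ⟪B x, A (A (A x))⟫_𝕜‖ := by
      rw [norm_sq_eq_inner_add_inner_of_mul_eq hA hB h]; exact norm_add_le _ _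
    _ ≤ _ := by
      rw [norm_mul, norm_mul, RCLike.norm_two, mul_assoc _ ‖B x‖]
      gcongr <;> exact norm_inner_le_norm _ _

theorem sum_norm_sq_le_of_mul_eq (hA : A.IsSymmetric) (hB : B.IsSymmetric)
    (h : A * B = B * A + κ • 1) (x : H) :
    ‖A (A (B x))‖ ^ 2 + ‖A (B (A x))‖ ^ 2 + ‖B (A (A x))‖ ^ 2 ≤
      25 * (‖A (A (A x))‖ ^ 2 + ‖B (B (B x))‖ ^ 2
        + ‖κ‖ ^ 2 * ‖A x‖ ^ 2 + ‖κ‖ ^ 2 * ‖B x‖ ^ 2) := by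
  have h' : B * A = A * B + (-κ) • 1 := by rw [h, neg_smul, add_neg_cancel_right]
  have hAAB : ‖A (A (B x))‖ ^ 2 ≤ 3 * (‖A (A (A x))‖ ^ 2 + ‖B (B (B x))‖ ^ 2
      + ‖κ‖ ^ 2 * ‖A x‖ ^ 2 + ‖κ‖ ^ 2 * ‖B x‖ ^ 2) := by
    have hBBA := norm_sq_le_of_mul_eq hB hA h' x
    rw [norm_neg] at hBBA
    exact sq_le_three_mul_of_coupled_bounds (norm_sq_le_of_mul_eq hA hB h x) hBBA
  have hABA : ‖A (B (A x))‖ ≤ ‖A (A (B x))‖ + ‖κ‖ * ‖A x‖ := by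
    have e : A (A (B x)) = A (B (A x)) + κ • A x :=
      LinearMap.congr_fun (mul_mul_eq_mul_mul_add_smul_of_mul_eq h) x
    simpa only [← e, norm_smul] using norm_le_add_norm_add (A (B (A x))) (κ • A x)
  have hBAA : ‖B (A (A x))‖ ≤ ‖A (A (B x))‖ + 2 * ‖κ‖ * ‖A x‖ := by
    have e : A (A (B x)) = B (A (A x)) + (2 * κ) • A x :=
      LinearMap.congr_fun (mul_mul_eq_mul_mul_add_two_smul_of_mul_eq h) x
    simpa only [← e, norm_smul, norm_mul, RCLike.norm_two, mul_assoc]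
      using norm_le_add_norm_add (B (A (A x))) ((2 * κ) • A x)
  nlinarith [add_sq_le (a := ‖A (A (B x))‖) (b := ‖κ‖ * ‖A x‖),
    add_sq_le (a := ‖A (A (B x))‖) (b := 2 * ‖κ‖ * ‖A x‖),
    pow_le_pow_left₀ (norm_nonneg _) hABA 2, pow_le_pow_left₀ (norm_nonneg _) hBAA 2]

end CanonicalCommutation

/-- **Interpolation Lemma.** If `A` and `B` are self-adjoint (symmetric) operators with
commutator `i[A,B] = λ·Id` for a real `λ`, then there is a universal constant `c > 0` such that
for all vectors `Ψ`,
`‖A²BΨ‖² + ‖ABAΨ‖² + ‖BA²Ψ‖² ≤ c (‖A³Ψ‖² + ‖B³Ψ‖² + λ²‖AΨ‖² + λ²‖BΨ‖²)`. -/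
theorem stmt0 (H : Type*) [NormedAddCommGroup H] [InnerProductSpace ℂ H] :
    ∃ c : ℝ, 0 < c ∧
      ∀ (A B : H →ₗ[ℂ] H) (lam : ℝ),
        (∀ x y : H, (inner ℂ (A x) y : ℂ) = inner ℂ x (A y)) →
        (∀ x y : H, (inner ℂ (B x) y : ℂ) = inner ℂ x (B y)) →
        (∀ x : H, Complex.I • (A (B x) - B (A x)) = (lam : ℂ) • x) →
        ∀ Ψ : H,
          ‖A (A (B Ψ))‖ ^ 2 + ‖A (B (A Ψ))‖ ^ 2 + ‖B (A (A Ψ))‖ ^ 2 ≤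
            c * (‖A (A (A Ψ))‖ ^ 2 + ‖B (B (B Ψ))‖ ^ 2
              + lam ^ 2 * ‖A Ψ‖ ^ 2 + lam ^ 2 * ‖B Ψ‖ ^ 2) := by
  refine ⟨25, by norm_num, fun A B lam hA hB hAB Ψ => ?_⟩
  have hmul : A * B = B * A + (-(Complex.I * lam)) • 1 := by
    ext x
    have hx := congrArg ((-Complex.I) • ·) (hAB x)
    simp only [smul_smul, neg_mul, Complex.I_mul_I, neg_neg, one_smul] at hx
    rw [Module.End.mul_apply, LinearMap.add_apply, Module.End.mul_apply, LinearMap.smul_apply,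
      Module.End.one_apply, ← hx, add_sub_cancel]
  have hnorm : ‖-(Complex.I * lam)‖ ^ 2 = lam ^ 2 := by simp
  simpa only [hnorm] using sum_norm_sq_le_of_mul_eq hA hB hmul Ψ
end

section
/- Let Γ be a positive self-adjoint trace-class operator on L²(ℝ³) and let |φ⟩⟨φ| be the orthogonal projection onto the span of a unit vector φ. Then the trace norm of S := Γ − |φ⟩⟨φ| is bounded by twice its Hilbert–Schmidt norm: Tr|S| ≤ 2‖S‖_HS. -/
/-!
Since `Tr Γ = 1 = ‖φ‖²`, the operator `S = Γ - |φ⟩⟨φ|` has trace zero, and since `Γ ≥ 0`, the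
quadratic form of `S` is nonnegative on the hyperplane `φᗮ`; hence `S` has at most one negative
eigenvalue `μ₀`. The remaining eigenvalues are nonnegative and sum to `|μ₀|`, so
`Tr |S| = 2 |μ₀| ≤ 2 ‖S‖_HS`.
-/

open scoped InnerProductSpace

open InnerProductSpace (rankOne rankOne_apply)

theorem Summable.sq_of_abs {ι : Type*} {f : ι → ℝ} (hf : Summable fun i => |f i|) :
    Summable fun i => f i ^ 2 := by
  refine .of_nonneg_of_le (fun i => sq_nonneg _) (fun i => ?_) (hf.mul_left (∑' j, |f j|))
  rw [← sq_abs, sq]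
  exact mul_le_mul_of_nonneg_right (hf.le_tsum i fun _ _ => abs_nonneg _) (abs_nonneg _)

theorem abs_le_sqrt_tsum_sq {ι : Type*} {f : ι → ℝ} (hf : Summable fun i => f i ^ 2) (i : ι) :
    |f i| ≤ √(∑' j, f j ^ 2) :=
  Real.abs_le_sqrt (hf.le_tsum i fun _ _ => sq_nonneg _)

/-- The positive terms add up to `-f i₀` for the single negative term `f i₀`,
so `∑ |f i| = 2 |f i₀|`. -/
theorem tsum_abs_le_two_mul_sqrt_tsum_sq {ι : Type*} {f : ι → ℝ}
    (hf : Summable fun i => |f i|) (hf₀ : ∑' i, f i = 0) (hneg : {i | f i < 0}.Subsingleton) :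
    ∑' i, |f i| ≤ 2 * √(∑' i, f i ^ 2) := by
  rcases hneg.eq_empty_or_singleton with hempty | ⟨i₀, hi₀⟩
  · have habs : ∀ i, |f i| = f i := fun i =>
      abs_of_nonneg <| not_lt.1 fun hi => (Set.eq_empty_iff_forall_notMem.1 hempty) i hi
    rw [tsum_congr habs, hf₀]
    positivity
  · have hdiff : ∑' i, (|f i| - f i) = |f i₀| - f i₀ := by
      refine tsum_eq_single i₀ fun i hi => ?_
      have : 0 ≤ f i := not_lt.1 fun h => hi (Set.mem_singleton_iff.1 (hi₀ ▸ h))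
      rw [abs_of_nonneg this, sub_self]
    rw [hf.tsum_sub (summable_abs_iff.1 hf), hf₀, sub_zero] at hdiff
    calc ∑' i, |f i| = |f i₀| - f i₀ := hdiff
      _ ≤ 2 * |f i₀| := by linarith [neg_abs_le (f i₀)]
      _ ≤ 2 * √(∑' i, f i ^ 2) := by gcongr; exact abs_le_sqrt_tsum_sq hf.sq_of_abs i₀

theorem exists_ne_zero_mul_add_mul_eq_zero {R : Type*} [CommRing R] [Nontrivial R] (a b : R) :
    ∃ c d : R, (c ≠ 0 ∨ d ≠ 0) ∧ c * a + d * b = 0 := by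
  by_cases hb : b = 0
  · exact ⟨0, 1, Or.inr one_ne_zero, by simp [hb]⟩
  · exact ⟨b, -a, Or.inl hb, by ring⟩

section

variable {𝕜 H ι : Type*} [RCLike 𝕜] [NormedAddCommGroup H] [InnerProductSpace 𝕜 H]
  {T : H →L[𝕜] H} {e : ι → H} {μ : ι → ℝ}

theorem Orthonormal.inner_map_smul_add_smul_of_eigen (he : Orthonormal 𝕜 e)
    (heig : ∀ i, T (e i) = (μ i : 𝕜) • e i) {i j : ι} (hij : i ≠ j) (c d : 𝕜) :
    ⟪c • e i + d • e j, T (c • e i + d • e j)⟫_𝕜 = ((μ i * ‖c‖ ^ 2 + μ j * ‖d‖ ^ 2 : ℝ) : 𝕜) := by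
  simp only [map_add, map_smul, heig, inner_add_left, inner_add_right, inner_smul_left,
    inner_smul_right, inner_self_eq_one_of_norm_eq_one (he.1 _), he.2 hij, he.2 hij.symm,
    mul_one, mul_zero, add_zero, zero_add]
  rw [mul_left_comm c, mul_left_comm d, RCLike.mul_conj, RCLike.mul_conj]
  push_cast
  ring

/-- Two eigenvectors with negative eigenvalues would span a plane meeting the hyperplane `φᗮ`,
and the form is negative on that plane. -/
theorem Orthonormal.setOf_neg_subsingleton_of_re_inner_nonneg {φ : H}
    (hT : ∀ v, ⟪φ, v⟫_𝕜 = 0 → 0 ≤ RCLike.re ⟪v, T v⟫_𝕜) (he : Orthonormal 𝕜 e)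
    (heig : ∀ i, T (e i) = (μ i : 𝕜) • e i) : {i | μ i < 0}.Subsingleton := by
  intro i (hi : μ i < 0) j (hj : μ j < 0)
  by_contra hij
  obtain ⟨c, d, hcd, hφ⟩ := exists_ne_zero_mul_add_mul_eq_zero ⟪φ, e i⟫_𝕜 ⟪φ, e j⟫_𝕜
  have hnonneg := hT (c • e i + d • e j) (by simpa [inner_add_right, inner_smul_right, mul_comm])
  rw [he.inner_map_smul_add_smul_of_eigen heig hij, RCLike.ofReal_re] at hnonneg
  have hci : μ i * ‖c‖ ^ 2 ≤ 0 := mul_nonpos_of_nonpos_of_nonneg hi.le (sq_nonneg _)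
  have hdj : μ j * ‖d‖ ^ 2 ≤ 0 := mul_nonpos_of_nonpos_of_nonneg hj.le (sq_nonneg _)
  rcases hcd with hc | hd
  · linarith [mul_neg_of_neg_of_pos hi (pow_pos (norm_pos_iff.2 hc) 2)]
  · linarith [mul_neg_of_neg_of_pos hj (pow_pos (norm_pos_iff.2 hd) 2)]

theorem HilbertBasis.tsum_eigenvalues_sub_rankOne [CompleteSpace H] (b : HilbertBasis ι 𝕜 H)
    (Γ : H →L[𝕜] H) (φ : H) (heig : ∀ i, (Γ - rankOne 𝕜 φ φ) (b i) = (μ i : 𝕜) • b i)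
    (hμ : Summable μ) :
    ∑' i, μ i = ∑' i, RCLike.re ⟪b i, Γ (b i)⟫_𝕜 - ‖φ‖ ^ 2 := by
  have hparseval : HasSum (fun i => RCLike.re (⟪φ, b i⟫_𝕜 * ⟪b i, φ⟫_𝕜)) (‖φ‖ ^ 2) := by
    simpa [inner_self_eq_norm_sq] using RCLike.hasSum_re _ (b.hasSum_inner_mul_inner φ φ)
  have hdiag : ∀ i, RCLike.re ⟪b i, Γ (b i)⟫_𝕜 = μ i + RCLike.re (⟪φ, b i⟫_𝕜 * ⟪b i, φ⟫_𝕜) := by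
    intro i
    have h : ⟪b i, Γ (b i)⟫_𝕜 = μ i + ⟪φ, b i⟫_𝕜 * ⟪b i, φ⟫_𝕜 := by
      have := congrArg (⟪b i, ·⟫_𝕜) (heig i)
      simp only [sub_apply, rankOne_apply, inner_sub_right, inner_smul_right,
        inner_self_eq_one_of_norm_eq_one (b.orthonormal.1 i), mul_one] at this
      linear_combination this
    rw [h, map_add, RCLike.ofReal_re]
  rw [tsum_congr hdiag, hμ.tsum_add hparseval.summable, hparseval.tsum_eq, add_sub_cancel_right]

end

/-- Let `Γ` be a positive self-adjoint trace-class operator (here: the one-particle density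
matrix, of trace one) on a separable Hilbert space, and let `|φ⟩⟨φ|` be the orthogonal
projection onto the span of a unit vector `φ`.  If `S := Γ − |φ⟩⟨φ|` is diagonalized by a
Hilbert basis `(e n)` with (absolutely summable) eigenvalues `μ n`, then the trace norm of `S`
is bounded by twice its Hilbert–Schmidt norm: `Tr|S| = ∑ |μ n| ≤ 2 (∑ μ n²)^{1/2} = 2‖S‖_HS`. -/
theorem stmt1 {H : Type*} [NormedAddCommGroup H] [InnerProductSpace ℂ H] [CompleteSpace H]
    (Γ : H →L[ℂ] H) (hΓpos : Γ.IsPositive)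
    (φ : H) (hφ : ‖φ‖ = 1)
    (e : HilbertBasis ℕ ℂ H) (μ : ℕ → ℝ)
    -- `(e n)` is an orthonormal eigenbasis of `S = Γ - |φ⟩⟨φ|` with eigenvalues `μ n`
    (heig : ∀ n, Γ (e n) - (inner ℂ φ (e n) : ℂ) • φ = (μ n : ℂ) • e n)
    -- `S` is trace class
    (hsum : Summable fun n => |μ n|)
    -- `Γ` has trace one (it is a one-particle density matrix)
    (htrace : ∑' n, (inner ℂ (e n) (Γ (e n)) : ℂ).re = 1) :
    ∑' n, |μ n| ≤ 2 * Real.sqrt (∑' n, μ n ^ 2) := by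
  have hS : ∀ n, (Γ - rankOne ℂ φ φ) (e n) = (μ n : ℂ) • e n := heig
  have htr : ∑' n, μ n = 0 := by
    rw [e.tsum_eigenvalues_sub_rankOne Γ φ hS (summable_abs_iff.1 hsum), hφ, one_pow, sub_eq_zero]
    exact htrace
  have hS_nonneg : ∀ v, ⟪φ, v⟫_ℂ = 0 → 0 ≤ RCLike.re ⟪v, (Γ - rankOne ℂ φ φ) v⟫_ℂ := by
    intro v hv
    simpa [hv] using (Complex.nonneg_iff.1 (hΓpos.inner_nonneg_right v)).1
  exact tsum_abs_le_two_mul_sqrt_tsum_sq hsum htr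
    (e.orthonormal.setOf_neg_subsingleton_of_re_inner_nonneg hS_nonneg hS)
end
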